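/- arXiv:2507.11254 — 3 statements merged into one kernel-verified Lean document; each statement's English description precedes it below -/
import Mathlib

section
/- For every n ≥ 3 there exist two rooted binary phylogenetic trees T and T' on a common label set X of size n+1 and two orderings σ and σ' on X such that d^σ_OLA(T,T') = 1 and d^{σ'}_OLA(T,T') = n−1; hence the difference |d^σ_OLA(T,T') − d^{σ'}_OLA(T,T')| can be as large as n−2, and this bound is sharp for this pair of trees. -/
namespace Phylo

/-- A rooted binary tree with leaves labelled by `W`.  A rooted binary
phylogenetic tree (whose root has out-degree one) is represented by the
subtree hanging below the root's unique child; the root edge is implicit. -/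
inductive PTree (W : Type) where
  | leaf (x : W)
  | node (l r : PTree W)
  deriving DecidableEq

namespace PTree

variable {W V : Type}

def leaves : PTree W → List W
  | leaf x => [x]
  | node l r => l.leaves ++ r.leaves

def map (f : W → V) : PTree W → PTree V
  | leaf x => leaf (f x)
  | node l r => node (l.map f) (r.map f)

/-- A tree is a phylogenetic tree when its leaves are bijectively labelled,
i.e. no label occurs twice. -/
def IsPhylo (t : PTree W) : Prop := t.leaves.Nodup

def labelSet [DecidableEq W] (t : PTree W) : Finset W := t.leaves.toFinset

end PTree

open PTree

/-- An ordering on the label set of `t`: a bijection from the leaf labels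
onto `{1, …, n}`. -/
def IsOrd [DecidableEq W] (t : PTree W) (σ : W → ℕ) : Prop :=
  Set.BijOn σ ↑t.labelSet (Set.Icc 1 t.leaves.length)

/-! ### Basic operations on trees with natural-number (rank) labels -/

def minLeaf : PTree ℕ → ℕ
  | .leaf x => x
  | .node l r => min (minLeaf l) (minLeaf r)

/-- Restriction of a tree to the leaves satisfying `p` (suppressing vertices
of out-degree one); `none` if no leaf survives. -/
def restrict {W : Type} (p : W → Bool) : PTree W → Option (PTree W)
  | .leaf x => if p x then some (.leaf x) else none
  | .node l r =>
    match restrict p l, restrict p r with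
    | some a, some b => some (.node a b)
    | some a, none => some a
    | none, some b => some b
    | none, none => none

/-- The sibling subtree of the leaf labelled `i` (the other child of its
parent), if the leaf occurs. -/
def sibling {W : Type} [DecidableEq W] (i : W) : PTree W → Option (PTree W)
  | .leaf _ => none
  | .node l r =>
    if l = .leaf i then some r
    else if r = .leaf i then some l
    else match sibling i l with
      | some s => some s
      | none => sibling i r

/-- Hamming distance between two (equal-length) vectors. -/
def hamming {α : Type} [DecidableEq α] (u v : List α) : ℕ :=
  (u.zip v).countP fun p => decide (p.1 ≠ p.2)

/-! ### OLA -/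

/-- The OLA label of a vertex, given as the root of its subtree (inside a tree
whose leaves are labelled by ranks):  a leaf is labelled by its rank, and the
internal vertex created when the `j`-th leaf was attached is labelled `-j`;
this creation step equals the larger of the two minimal leaf ranks below. -/
def olaLabel : PTree ℕ → ℤ
  | .leaf x => (x : ℤ)
  | .node l r => -(max (minLeaf l) (minLeaf r) : ℤ)

/-- The `i`-th coordinate (for `i ≥ 3`) of the OLA vector:  the OLA label of
the sibling of the rank-`i` leaf in the restriction of `t` to ranks `≤ i`. -/
def olaCoord (t : PTree ℕ) (i : ℕ) : ℤ :=
  match restrict (fun x => decide (x ≤ i)) t with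
  | some ti =>
    match sibling i ti with
    | some s => olaLabel s
    | none => 0
  | none => 0

/-- The OLA vector of a tree whose leaves are labelled by ranks `1, …, n`. -/
def olaVec (t : PTree ℕ) : List ℤ :=
  (List.range t.leaves.length).map fun j =>
    if j = 0 then 0 else if j = 1 then 1 else olaCoord t (j + 1)

/-- The OLA distance of `t, t'` with respect to the ordering `σ`. -/
def dOLA {W : Type} (σ : W → ℕ) (t t' : PTree W) : ℕ :=
  hamming (olaVec (t.map σ)) (olaVec (t'.map σ))

/-- The OLA measure: minimum OLA distance over all orderings. -/
noncomputable def dOLAstar {W : Type} [DecidableEq W] (t t' : PTree W) : ℕ :=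
  sInf {k | ∃ σ : W → ℕ, IsOrd t σ ∧ dOLA σ t t' = k}

end Phylo
/-! ### HOP -/

namespace Phylo
open PTree

/-- The HOP labels of the internal vertices on the path from the root of `t`
down to the leaf of rank `i` (the internal HOP label of a vertex with children
`l, r` is `max (minLeaf l) (minLeaf r)`). -/
def pathLabels (i : ℕ) : PTree ℕ → List ℕ
  | .leaf _ => []
  | .node l r =>
    if i ∈ l.leaves then max (minLeaf l) (minLeaf r) :: pathLabels i l
    else if i ∈ r.leaves then max (minLeaf l) (minLeaf r) :: pathLabels i r
    else []

/-- The `i`-th path segment `v(P_i)` of the HOP vector of `t`:  the internal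
labels strictly between the internal vertex labelled `i` and the leaf of rank
`i` (for `i = 1` the vertex labelled `1` is the root `ρ`). -/
def hopSeg (t : PTree ℕ) (i : ℕ) : List ℕ :=
  if i = 1 then 1 :: pathLabels 1 t
  else ((pathLabels i t).dropWhile fun a => decide (a ≠ i)).drop 1

/-- Length of a longest common subsequence of two lists. -/
def lcsLen : List ℕ → List ℕ → ℕ
  | [], _ => 0
  | _ :: _, [] => 0
  | a :: u, b :: v =>
    if a = b then lcsLen u v + 1
    else max (lcsLen (a :: u) v) (lcsLen u (b :: v))
  termination_by u v => u.length + v.length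
  decreasing_by all_goals (simp only [List.length_cons]; omega)

/-- The HOP similarity of `t, t'` with respect to `σ`. -/
def simHOP {W : Type} (σ : W → ℕ) (t t' : PTree W) : ℕ :=
  ∑ i ∈ Finset.range (t.leaves.length - 1),
    lcsLen (hopSeg (t.map σ) (i + 1)) (hopSeg (t'.map σ) (i + 1))

/-- The HOP distance of `t, t'` with respect to `σ`. -/
def dHOP {W : Type} (σ : W → ℕ) (t t' : PTree W) : ℕ :=
  t.leaves.length - simHOP σ t t'

/-- The HOP measure: minimum HOP distance over all orderings. -/
noncomputable def dHOPstar {W : Type} [DecidableEq W] (t t' : PTree W) : ℕ :=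
  sInf {k | ∃ σ : W → ℕ, IsOrd t σ ∧ dHOP σ t t' = k}

end Phylo
/-! ### Phylo2Vec (P2V) -/

namespace Phylo
open PTree

/-- Binary trees with rank-labelled leaves and optionally labelled internal
vertices, used to run the P2V labelling algorithm. -/
inductive LTree where
  | leaf (r : ℕ)
  | node (lbl : Option ℕ) (l r : LTree)
  deriving DecidableEq

namespace LTree

def ofPTree : PTree ℕ → LTree
  | .leaf x => .leaf x
  | .node l r => .node none (ofPTree l) (ofPTree r)

/-- The label of the root of an `LTree` (a leaf is labelled by its rank). -/
def lbl? : LTree → Option ℕ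
  | .leaf r => some r
  | .node lbl _ _ => lbl

/-- The candidate vertices for the next P2V label: unlabelled internal
vertices both of whose children are labelled, together with the larger child
label; a vertex is recorded by its position (a list of booleans). -/
def cands : LTree → List (List Bool × ℕ)
  | .leaf _ => []
  | .node lbl l r =>
    (match lbl, l.lbl?, r.lbl? with
      | none, some a, some b => [(([] : List Bool), max a b)]
      | _, _, _ => []) ++
    (cands l).map (fun p => (false :: p.1, p.2)) ++
    (cands r).map (fun p => (true :: p.1, p.2))

/-- Set the label of the vertex at position `p` to `j`. -/
def setLbl (j : ℕ) : LTree → List Bool → LTree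
  | .leaf r, _ => .leaf r
  | .node _ l r, [] => .node (some j) l r
  | .node lbl l r, false :: p => .node lbl (setLbl j l p) r
  | .node lbl l r, true :: p => .node lbl l (setLbl j r p)

/-- One step of the P2V labelling: give label `j` to the candidate vertex
whose larger child label is maximal. -/
def step (j : ℕ) (t : LTree) : LTree :=
  match List.argmax Prod.snd t.cands with
  | some c => setLbl j t c.1
  | none => t

/-- Run `k` steps of the P2V labelling, starting with label `j`. -/
def run : ℕ → ℕ → LTree → LTree
  | 0, _, t => t
  | k + 1, j, t => run k (j + 1) (step j t)

def siblingL (i : ℕ) : LTree → Option LTree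
  | .leaf _ => none
  | .node _ l r =>
    if l = .leaf i then some r
    else if r = .leaf i then some l
    else match siblingL i l with
      | some s => some s
      | none => siblingL i r

def subAtL : LTree → List Bool → Option LTree
  | t, [] => some t
  | .leaf _, _ :: _ => none
  | .node _ l _, false :: p => subAtL l p
  | .node _ _ r, true :: p => subAtL r p

end LTree

/-- The `i`-th step P2V labelling of the restriction `T_i` of `t` to ranks
`≤ i`:  the internal vertices are labelled `i+1, …, 2i-1`. -/
def p2vLabeled (t : PTree ℕ) (i : ℕ) : Option LTree :=
  (restrict (fun x => decide (x ≤ i)) t).map fun ti =>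
    LTree.run (i - 1) (i + 1) (LTree.ofPTree ti)

/-- The `i`-th coordinate (for `i ≥ 3`) of the P2V vector: the `i`-th step
P2V label of the sibling of the rank-`i` leaf in `T_i`. -/
def p2vCoord (t : PTree ℕ) (i : ℕ) : ℤ :=
  match p2vLabeled t i with
  | some lt =>
    match LTree.siblingL i lt with
    | some s => ((LTree.lbl? s).getD 0 : ℤ)
    | none => 0
  | none => 0

/-- The P2V vector of a tree whose leaves are labelled by ranks `1, …, n`. -/
def p2vVec (t : PTree ℕ) : List ℤ :=
  (List.range t.leaves.length).map fun j =>
    if j = 0 then 0 else if j = 1 then 1 else p2vCoord t (j + 1)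

/-- The P2V distance of `t, t'` with respect to `σ`. -/
def dP2V {W : Type} (σ : W → ℕ) (t t' : PTree W) : ℕ :=
  hamming (p2vVec (t.map σ)) (p2vVec (t'.map σ))

/-- The P2V measure: minimum P2V distance over all orderings. -/
noncomputable def dP2Vstar {W : Type} [DecidableEq W] (t t' : PTree W) : ℕ :=
  sInf {k | ∃ σ : W → ℕ, IsOrd t σ ∧ dP2V σ t t' = k}

end Phylo
/-! ### Isomorphism, positions, and the rSPR distance -/

namespace Phylo
open PTree

/-- Isomorphism of rooted (leaf-labelled) binary trees: the shapes agree up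
to swapping children, and corresponding leaves carry the same label. -/
inductive Iso {W : Type} : PTree W → PTree W → Prop
  | leaf (x : W) : Iso (.leaf x) (.leaf x)
  | node {a b c d : PTree W} : Iso a c → Iso b d → Iso (.node a b) (.node c d)
  | swap {a b c d : PTree W} : Iso a d → Iso b c → Iso (.node a b) (.node c d)

/-- The subtree of `t` at position `p` (a list of booleans: `false` = left
child, `true` = right child). -/
def subAt {W : Type} : PTree W → List Bool → Option (PTree W)
  | t, [] => some t
  | .leaf _, _ :: _ => none
  | .node l _, false :: p => subAt l p
  | .node _ r, true :: p => subAt r p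

/-- Replace the subtree of `t` at position `p` by `s`. -/
def replaceAt {W : Type} : PTree W → List Bool → PTree W → PTree W
  | _, [], s => s
  | .leaf x, _ :: _, _ => .leaf x
  | .node l r, false :: p, s => .node (replaceAt l p s) r
  | .node l r, true :: p, s => .node l (replaceAt r p s)

/-- The position of the leaf labelled `x` in `t`, if it occurs. -/
def leafPos {W : Type} [DecidableEq W] (x : W) : PTree W → Option (List Bool)
  | .leaf y => if y = x then some [] else none
  | .node l r =>
    match leafPos x l with
    | some p => some (false :: p)
    | none => (leafPos x r).map (true :: ·)

/-- The position of the leaf labelled `x` (defaulting to the root). -/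
def pos {W : Type} [DecidableEq W] (t : PTree W) (x : W) : List Bool :=
  (leafPos x t).getD []

/-- One-hole contexts: plugging a tree into a context reconstructs a tree.
Each frame records a sibling subtree and on which side it sits. -/
def plug {W : Type} : List (Bool × PTree W) → PTree W → PTree W
  | [], t => t
  | (false, s) :: c, t => .node (plug c t) s
  | (true, s) :: c, t => .node s (plug c t)

/-- A single rooted subtree prune and regraft (rSPR) move: prune the subtree
`s` (whose parent is an internal vertex of `t`), suppress its parent, and
regraft `s` by subdividing an edge (possibly the root edge) of the remaining
tree. -/
def RSPRMove {W : Type} (t t' : PTree W) : Prop :=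
  ∃ (c₁ : List (Bool × PTree W)) (s r : PTree W),
    (t = plug c₁ (.node s r) ∨ t = plug c₁ (.node r s)) ∧
    ∃ (c₂ : List (Bool × PTree W)) (b : PTree W),
      plug c₁ r = plug c₂ b ∧
      (t' = plug c₂ (.node s b) ∨ t' = plug c₂ (.node b s))

/-- `Reach k t t'`: `t` can be transformed into (a tree isomorphic to) `t'`
by `k` rSPR moves. -/
inductive Reach {W : Type} : ℕ → PTree W → PTree W → Prop
  | refl {t t' : PTree W} : Iso t t' → Reach 0 t t'
  | step {k : ℕ} {t u t' : PTree W} :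
      RSPRMove t u → Reach k u t' → Reach (k + 1) t t'

/-- The rSPR distance. -/
noncomputable def dRSPR {W : Type} (t t' : PTree W) : ℕ :=
  sInf {k | Reach k t t'}

end Phylo
/-! ### Agreement forests and the hybrid number -/

namespace Phylo
open PTree

/-- Longest common prefix of two positions. -/
def lcp : List Bool → List Bool → List Bool
  | a :: u, b :: v => if a = b then a :: lcp u v else []
  | _, _ => []

variable {W : Type} [DecidableEq W]

/-- Restriction of `t` to the labels in the finite set `L`. -/
def restrictF (t : PTree W) (L : Finset W) : Option (PTree W) :=
  restrict (fun x => decide (x ∈ L)) t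

/-- The vertex set (as a set of positions) of the minimal subtree `T(L)` of
`t` connecting the leaves with labels in `L`. -/
def compVerts (t : PTree W) (L : Finset W) : Set (List Bool) :=
  {p | ∃ a ∈ L, ∃ b ∈ L,
    lcp (pos t a) (pos t b) <+: p ∧ (p <+: pos t a ∨ p <+: pos t b)}

/-- The vertex set of the minimal subtree of `t` connecting the leaves with
labels in `L` together with the root `ρ`. -/
def rhoVerts (t : PTree W) (L : Finset W) : Set (List Bool) :=
  {p | ∃ a ∈ L, p <+: pos t a}

/-- The position of the root of the minimal connecting subtree `T(L)`. -/
noncomputable def rootOf (t : PTree W) (L : Finset W) : List Bool :=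
  match L.toList with
  | [] => []
  | a :: rest => rest.foldr (fun b acc => lcp (pos t b) acc) (pos t a)

/-- `Lρ` (the label set of the component containing the root `ρ`, possibly
empty) together with the nonempty label sets in `C` form an agreement forest
for `t` and `t'`. -/
def IsAgreementForest (t t' : PTree W) (Lρ : Finset W) (C : Finset (Finset W)) : Prop :=
  -- the label sets partition the common label set
  (∀ L ∈ C, L.Nonempty) ∧
  (∀ L ∈ C, ∀ L' ∈ C, L ≠ L' → Disjoint L L') ∧
  (∀ L ∈ C, Disjoint Lρ L) ∧
  (∀ x ∈ t.labelSet, x ∈ Lρ ∨ ∃ L ∈ C, x ∈ L) ∧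
  (↑Lρ ⊆ (t.labelSet : Set W)) ∧ (∀ L ∈ C, ↑L ⊆ (t.labelSet : Set W)) ∧
  -- the restrictions of t and t' to each label set are isomorphic
  (∀ L ∈ insert Lρ C,
    ∀ u, restrictF t L = some u → ∃ u', restrictF t' L = some u' ∧ Iso u u') ∧
  -- the minimal connecting subtrees are vertex-disjoint, in t and in t'
  (∀ L ∈ C, ∀ L' ∈ C, L ≠ L' →
    (∀ p ∈ compVerts t L, p ∉ compVerts t L') ∧
    (∀ p ∈ compVerts t' L, p ∉ compVerts t' L')) ∧
  (∀ L ∈ C,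
    (∀ p ∈ rhoVerts t Lρ, p ∉ compVerts t L) ∧
    (∀ p ∈ rhoVerts t' Lρ, p ∉ compVerts t' L))

/-- The ancestor relation between components of an agreement forest: the root
of `T(L)` is a (proper) ancestor of the root of `T(L')` in `t` or in `t'`. -/
def afEdge (t t' : PTree W) (C : Finset (Finset W)) (L L' : Finset W) : Prop :=
  L ∈ C ∧ L' ∈ C ∧ L ≠ L' ∧
  ((rootOf t L <+: rootOf t L' ∧ rootOf t L ≠ rootOf t L') ∨
   (rootOf t' L <+: rootOf t' L' ∧ rootOf t' L ≠ rootOf t' L'))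

/-- An acyclic agreement forest. -/
def IsAcyclicAF (t t' : PTree W) (Lρ : Finset W) (C : Finset (Finset W)) : Prop :=
  IsAgreementForest t t' Lρ C ∧
  ∀ L, ¬ Relation.TransGen (afEdge t t' C) L L

/-- The hybrid number of `t` and `t'`: the minimum number of non-root
components of an acyclic agreement forest (Baroni–Semple–Steel). -/
noncomputable def hyb (t t' : PTree W) : ℕ :=
  sInf {k | ∃ Lρ C, IsAcyclicAF t t' Lρ C ∧ C.card = k}

/-! ### Caterpillars and cherry-picking sequences -/

/-- The caterpillar `(z₁, z₂, z₃, …)`: `z₁, z₂` form a cherry and each later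
leaf is attached above the previous ones. -/
def caterpillar (z₁ z₂ : W) (zs : List W) : PTree W :=
  zs.foldl (fun t z => .node t (.leaf z)) (.node (.leaf z₁) (.leaf z₂))

/-- The cherry partner of the leaf `x` in `t`, if `x` is in a cherry. -/
def cherryPartner (x : W) (t : PTree W) : Option W :=
  match sibling x t with
  | some (.leaf y) => some y
  | _ => none

/-- The restriction of `t` obtained by deleting the first `i` elements of the
sequence `S`. -/
def restAfter (t : PTree W) (S : List W) (i : ℕ) : Option (PTree W) :=
  restrict (fun x => decide (x ∉ S.take i)) t

/-- `S` is a cherry-picking sequence for `t`: every element except the last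
is in a cherry of the restriction of `t` to the not-yet-picked leaves. -/
def IsCPS (t : PTree W) (S : List W) : Prop :=
  ∀ i, i + 1 < S.length →
    ∃ u, restAfter t S i = some u ∧
      ∀ h : i < S.length, ∃ y, cherryPartner (S.get ⟨i, h⟩) u = some y

/-- `S` is a common cherry-picking sequence for `t` and `t'` (in particular
it enumerates the common leaf set). -/
def IsCommonCPS (t t' : PTree W) (S : List W) : Prop :=
  S.Nodup ∧ (∀ x, x ∈ S ↔ x ∈ t.leaves) ∧ IsCPS t S ∧ IsCPS t' S

/-- The weight of a common cherry-picking sequence: the number of positions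
(except the last) at which the cherry partners in the two restrictions
disagree. -/
def wtCPS (t t' : PTree W) (S : List W) : ℕ :=
  (List.range (S.length - 1)).countP fun i =>
    match S[i]?, restAfter t S i, restAfter t' S i with
    | some x, some u, some u' => decide (cherryPartner x u ≠ cherryPartner x u')
    | _, _, _ => false

/-- The ordering on the leaf set induced by the sequence `S`:
`σ (x_i) = n - i + 1` (with `i` one-based). -/
def inducedOrd (S : List W) (x : W) : ℕ :=
  S.length - S.idxOf x

end Phylo
/-! ### Phylogenetic networks, tree-child / temporal networks, display -/

namespace Phylo
open PTree

/-- A finite directed graph with a root and designated leaf vertices, used to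
model rooted binary phylogenetic networks. -/
structure Network (W : Type) where
  V : Type
  [fin : Fintype V]
  [deq : DecidableEq V]
  edge : V → V → Bool
  root : V
  leafOf : W → V

attribute [instance] Network.fin Network.deq

namespace Network

variable {W : Type} [DecidableEq W]

def inDeg (N : Network W) (v : N.V) : ℕ :=
  Fintype.card {u : N.V // N.edge u v = true}

def outDeg (N : Network W) (v : N.V) : ℕ :=
  Fintype.card {u : N.V // N.edge v u = true}

/-- The number of reticulations (in-degree-two vertices). -/
def retCount (N : Network W) : ℕ :=
  Fintype.card {v : N.V // N.inDeg v = 2}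

/-- `N` is a rooted binary phylogenetic network with leaf set `A`. -/
def Wf (N : Network W) (A : Finset W) : Prop :=
  (∀ v : N.V, ¬ Relation.TransGen (fun a b : N.V => N.edge a b = true) v v) ∧
  N.inDeg N.root = 0 ∧ N.outDeg N.root = 1 ∧
  Set.InjOn N.leafOf ↑A ∧
  (∀ x ∈ A, N.inDeg (N.leafOf x) = 1 ∧ N.outDeg (N.leafOf x) = 0) ∧
  (∀ v : N.V, N.outDeg v = 0 → ∃ x ∈ A, v = N.leafOf x) ∧
  (∀ v : N.V, v ≠ N.root → (∀ x ∈ A, v ≠ N.leafOf x) →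
    (N.inDeg v = 1 ∧ N.outDeg v = 2) ∨ (N.inDeg v = 2 ∧ N.outDeg v = 1))

/-- Tree-child: every non-leaf vertex has a child of in-degree one. -/
def TreeChild (N : Network W) : Prop :=
  ∀ v : N.V, N.outDeg v ≠ 0 → ∃ u : N.V, N.edge v u = true ∧ N.inDeg u = 1

/-- Temporal: there is a time map which is constant along reticulation edges
and strictly increasing along tree edges. -/
def Temporal (N : Network W) : Prop :=
  ∃ time : N.V → ℝ, (∀ v, 0 < time v) ∧
    ∀ u v : N.V, N.edge u v = true →
      (N.inDeg v = 2 → time u = time v) ∧ (N.inDeg v = 1 → time u < time v)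

/-- A directed path in `N` from `u` to `v`, with at least one edge. -/
def GoodPath (N : Network W) (l : List N.V) (u v : N.V) : Prop :=
  2 ≤ l.length ∧ l.head? = some u ∧ l.getLast? = some v ∧
    l.Chain' (fun a b => N.edge a b = true)

/-- The interior of a path. -/
def inter {α : Type} (l : List α) : List α := (l.drop 1).dropLast

/-- `N` displays the tree `t`: there is a subtree of `N` which is a
subdivision of `t` (including its root edge).  The vertices of `t` are given
by their positions; edge `e = none` is the root edge and `e = some (p, b)`
the edge from the vertex at `p` to its `b`-child. -/
def Displays (N : Network W) (t : PTree W) : Prop :=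
  ∃ (φ : List Bool → N.V) (P : Option (List Bool × Bool) → List N.V),
    GoodPath N (P none) N.root (φ []) ∧
    (∀ p l r, subAt t p = some (.node l r) →
      GoodPath N (P (some (p, false))) (φ p) (φ (p ++ [false])) ∧
      GoodPath N (P (some (p, true))) (φ p) (φ (p ++ [true]))) ∧
    (∀ x : W, ∀ p, leafPos x t = some p → φ p = N.leafOf x) ∧
    (∀ p q, (subAt t p).isSome → (subAt t q).isSome → φ p = φ q → p = q) ∧
    -- the paths realising distinct tree edges are internally disjoint
    (∀ e e' : Option (List Bool × Bool), e ≠ e' →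
      (∀ pb, e = some pb → ∃ l r, subAt t pb.1 = some (.node l r)) →
      (∀ pb, e' = some pb → ∃ l r, subAt t pb.1 = some (.node l r)) →
      ∀ v ∈ inter (P e), v ∉ P e') ∧
    (∀ e : Option (List Bool × Bool),
      (∀ pb, e = some pb → ∃ l r, subAt t pb.1 = some (.node l r)) →
      ∀ v ∈ inter (P e), ∀ p, (subAt t p).isSome → v ≠ φ p)

end Network

/-- The temporal tree-child hybrid number of `t` and `t'`. -/
noncomputable def hybTemporal (t t' : PTree W) [DecidableEq W] : ℕ :=
  sInf {k | ∃ N : Network W, N.Wf t.labelSet ∧ N.TreeChild ∧ N.Temporal ∧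
    N.Displays t ∧ N.Displays t' ∧ N.retCount = k}

end Phylo
/-! ### Labelled decorations, pendant subtrees, and the reductions -/

namespace Phylo
open PTree

/-- Binary trees in which every vertex carries a label in `α`. -/
inductive DTree (α : Type) where
  | leaf (lbl : α)
  | node (lbl : α) (l r : DTree α)

/-- Label-preserving isomorphism of decorated trees. -/
inductive DIso {α : Type} : DTree α → DTree α → Prop
  | leaf (x : α) : DIso (.leaf x) (.leaf x)
  | node {k : α} {a b c d : DTree α} :
      DIso a c → DIso b d → DIso (.node k a b) (.node k c d)
  | swap {k : α} {a b c d : DTree α} :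
      DIso a d → DIso b c → DIso (.node k a b) (.node k c d)

/-- The HOP labelling of a (rank-labelled) tree: leaves are labelled by their
rank and an internal vertex by the larger of the minimal ranks below its two
children. -/
def hopDec : PTree ℕ → DTree ℕ
  | .leaf x => .leaf x
  | .node l r => .node (max (minLeaf l) (minLeaf r)) (hopDec l) (hopDec r)

/-- The OLA labelling of a (rank-labelled) tree: leaves are labelled by their
rank and an internal vertex by `-j` where `j` is the step at which it was
created (the larger of the minimal ranks below its two children). -/
def olaDec : PTree ℕ → DTree ℤ
  | .leaf x => .leaf (x : ℤ)
  | .node l r => .node (-(max (minLeaf l) (minLeaf r) : ℤ)) (olaDec l) (olaDec r)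

/-- The P2V labelling of the subtree at position `p` of a rank-labelled tree
`t` with `n` leaves (labels read off after the full run of the algorithm). -/
noncomputable def p2vDecAt (t : PTree ℕ) (p : List Bool) : Option (DTree ℕ) :=
  (Option.bind (p2vLabeled t t.leaves.length) (fun lt => LTree.subAtL lt p)).map toD
where
  toD : LTree → DTree ℕ
    | .leaf r => .leaf r
    | .node lbl l r => .node (lbl.getD 0) (toD l) (toD r)

/-- The restriction of a vector to the coordinates whose (one-based) indices
lie in `R` (the coordinates associated with a set of ranks). -/
def restrictVec (v : List ℤ) (R : Finset ℕ) : List ℤ :=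
  (List.range v.length).filterMap fun j =>
    if j + 1 ∈ R then v[j]? else none

variable {W : Type} [DecidableEq W]

/-- `Y` is the label set of a pendant subtree of `t`. -/
def IsPendantSet (t : PTree W) (Y : Finset W) : Prop :=
  ∃ p s, subAt t p = some s ∧ s.labelSet = Y

/-- `Y` carries a common pendant subtree of `t` and `t'`. -/
def IsCommonPendant (t t' : PTree W) (Y : Finset W) : Prop :=
  IsPendantSet t Y ∧ IsPendantSet t' Y ∧
  ∀ u u', restrictF t Y = some u → restrictF t' Y = some u' → Iso u u'

/-- The position of the parent of the leaf labelled `x`. -/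
def parentPos (t : PTree W) (x : W) : List Bool := (pos t x).dropLast

/-- `xs` is a chain of `t`. -/
def IsChain (t : PTree W) (xs : List W) : Prop :=
  3 ≤ xs.length ∧ (∀ x ∈ xs, x ∈ t.leaves) ∧ xs.Nodup ∧
  (∀ (h1 : 0 < xs.length) (h2 : 1 < xs.length),
    parentPos t (xs.get ⟨0, h1⟩) = parentPos t (xs.get ⟨1, h2⟩) ∨
    parentPos t (xs.get ⟨1, h2⟩) = (parentPos t (xs.get ⟨0, h1⟩)).dropLast) ∧
  (∀ i (h : i + 2 < xs.length),
    parentPos t (xs.get ⟨i + 2, h⟩)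
      = (parentPos t (xs.get ⟨i + 1, by omega⟩)).dropLast)

/-- A single application of the subtree reduction, replacing (in both trees)
a maximal common pendant subtree with label set `Y` (with at least two
leaves) by a single new leaf `pnew`. -/
def SubtreeReduction (t t' u u' : PTree W) (Y : Finset W) (pnew : W) : Prop :=
  IsCommonPendant t t' Y ∧ 2 ≤ Y.card ∧
  (∀ Z, IsCommonPendant t t' Z → Y ⊆ Z → Z = Y) ∧
  pnew ∉ t.leaves ∧ pnew ∉ t'.leaves ∧
  (∃ p s, subAt t p = some s ∧ s.labelSet = Y ∧ u = replaceAt t p (.leaf pnew)) ∧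
  (∃ q s', subAt t' q = some s' ∧ s'.labelSet = Y ∧ u' = replaceAt t' q (.leaf pnew))

/-- A single application of the chain reduction, replacing (in both trees) a
maximal common chain `xs` of length at least four by a common chain of length
three on the new labels `c₁, c₂, c₃`. -/
def ChainReduction (t t' u u' : PTree W) (xs : List W) (c₁ c₂ c₃ : W) : Prop :=
  4 ≤ xs.length ∧ IsChain t xs ∧ IsChain t' xs ∧
  (∀ ys, IsChain t ys → IsChain t' ys → xs <:+: ys → ys = xs) ∧
  c₁ ∉ t.leaves ∧ c₂ ∉ t.leaves ∧ c₃ ∉ t.leaves ∧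
  c₁ ≠ c₂ ∧ c₁ ≠ c₃ ∧ c₂ ≠ c₃ ∧
  (∃ u₀ u₀',
    restrict (fun x => decide (x ∉ xs.drop 3)) t = some u₀ ∧
    restrict (fun x => decide (x ∉ xs.drop 3)) t' = some u₀' ∧
    u = u₀.map (chainRen xs c₁ c₂ c₃) ∧ u' = u₀'.map (chainRen xs c₁ c₂ c₃))
where
  chainRen (xs : List W) (c₁ c₂ c₃ : W) (x : W) : W :=
    if xs[0]? = some x then c₁ else if xs[1]? = some x then c₂
    else if xs[2]? = some x then c₃ else x

/-- The elements of `Y` occupy consecutive ranks under `σ`. -/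
def ConsecRanks (σ : W → ℕ) (Y : Finset W) : Prop :=
  ∃ i, Y.image σ = Finset.Ico i (i + Y.card)

end Phylo
/-! ### Polynomial time, NP, and NP-hardness -/

namespace Phylo

/-- Decision problems over binary strings. -/
def Lang : Type := List Bool → Prop

/-- A trivial finite encoding of binary strings. -/
def boolsEnc : Computability.Encoding (List Bool) Bool :=
  ⟨id, some, fun _ => rfl⟩

/-- `f` is computable in polynomial time (by a Turing machine, in the sense
of Mathlib's `Turing.TM2ComputableInPolyTime`). -/
def PolyTimeComputable (f : List Bool → List Bool) : Prop :=
  Nonempty (Turing.TM2ComputableInPolyTime boolsEnc.encode boolsEnc.encode f)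

/-- Polynomial-time many-one reducibility. -/
def Reduces (A B : Lang) : Prop :=
  ∃ f : List Bool → List Bool, PolyTimeComputable f ∧ ∀ x, A x ↔ B (f x)

/-- Pairing of an input with a certificate. -/
def pairEnc (x c : List Bool) : List Bool :=
  (x.flatMap fun b => [true, b]) ++ false :: c

/-- `A` is in NP: membership is certified by certificates of polynomially
bounded length, checkable by a polynomial-time verifier. -/
def InNP (A : Lang) : Prop :=
  ∃ (g : List Bool → List Bool) (q : Polynomial ℕ),
    PolyTimeComputable g ∧
    ∀ x, A x ↔ ∃ c : List Bool,
      c.length ≤ q.eval x.length ∧ g (pairEnc x c) = [true]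

/-- `B` is NP-hard. -/
def NPHard (B : Lang) : Prop := ∀ A, InNP A → Reduces A B

def encNat (k : ℕ) : List Bool := List.replicate k true ++ [false]

def encTree {n : ℕ} : PTree (Fin n) → List Bool
  | .leaf x => false :: encNat x.val
  | .node l r => true :: (encTree l ++ encTree r)

open PTree in
/-- The decision version of computing the HOP measure `d*_HOP`. -/
noncomputable def HOPLang : Lang := fun w =>
  ∃ (n : ℕ) (t t' : PTree (Fin n)) (k : ℕ),
    w = encNat n ++ encTree t ++ encTree t' ++ encNat k ∧
    t.IsPhylo ∧ t'.IsPhylo ∧ t.labelSet = t'.labelSet ∧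
    dHOPstar t t' ≤ k

end Phylo
/-!
Both trees are caterpillars, and restricting a caterpillar to the leaves of rank `≤ i` leaves a
caterpillar on those leaves in the same order. Hence the `i`-th OLA coordinate only depends on
where rank `i` stands in the rank list filtered by `≤ i`: in the cherry it records the other
cherry leaf (a positive label), further up it records an internal vertex (a negative label).

If `y` gets the largest rank and the `xᵢ` are ranked in order, the filtered lists of `T` and `T'`
coincide below rank `n + 1`, and at rank `n + 1` the sibling of `y` is internal in `T` but the
leaf `x₁` in `T'`: distance `1`. If `y` gets rank `1` and the `xᵢ` are ranked decreasingly, the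
leaf of rank `i ≥ 3` has cherry partner `i - 1` in `T` but `y` in `T'`: distance `n - 1`.
Conversely every ordering gives distance at least `1` (look at the coordinate of the rank of `y`,
or at coordinate `3` if that rank is at most `2`) and at most `n - 1` (the first two coordinates
are always `0, 1`), which bounds the difference by `n - 2`.
-/

namespace Phylo
open PTree List

section Caterpillar

variable {W : Type} (a b : W)

theorem caterpillar_nil : caterpillar a b [] = .node (.leaf a) (.leaf b) := rfl

theorem caterpillar_append_singleton (zs : List W) (z : W) :
    caterpillar a b (zs ++ [z]) = .node (caterpillar a b zs) (.leaf z) := by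
  simp [caterpillar, foldl_append]

theorem caterpillar_ne_leaf (zs : List W) (x : W) : caterpillar a b zs ≠ .leaf x := by
  rcases eq_nil_or_concat zs with rfl | ⟨ws, w, rfl⟩
  · simp [caterpillar_nil]
  · simp [caterpillar_append_singleton]

theorem leaves_caterpillar (zs : List W) : (caterpillar a b zs).leaves = a :: b :: zs := by
  induction zs using reverseRecOn with
  | nil => rfl
  | append_singleton ws z ih => simp [caterpillar_append_singleton, leaves, ih]

theorem map_caterpillar {V : Type} (f : W → V) (zs : List W) :
    (caterpillar a b zs).map f = caterpillar (f a) (f b) (zs.map f) := by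
  induction zs using reverseRecOn with
  | nil => rfl
  | append_singleton ws z ih => simp [caterpillar_append_singleton, PTree.map, ih]

def caterpillarOfList : List W → Option (PTree W)
  | [] => none
  | [a] => some (.leaf a)
  | a :: b :: zs => some (caterpillar a b zs)

theorem restrict_caterpillar (p : W → Bool) (zs : List W) :
    restrict p (caterpillar a b zs) = caterpillarOfList ((a :: b :: zs).filter p) := by
  induction zs using reverseRecOn with
  | nil =>
    cases ha : p a <;> cases hb : p b <;>
      simp [restrict, caterpillarOfList, caterpillar_nil, ha, hb]
  | append_singleton ws z ih =>
    rw [caterpillar_append_singleton, ← cons_append, ← cons_append, filter_append]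
    rcases hF : (a :: b :: ws).filter p with _ | ⟨x, _ | ⟨y, l⟩⟩ <;> rw [hF] at ih <;>
      cases hz : p z <;>
      simp [restrict, caterpillarOfList, ih, hz, caterpillar_append_singleton, caterpillar_nil]

variable [DecidableEq W]

theorem sibling_caterpillar_left {zs : List W} (h : a ∉ zs) :
    sibling a (caterpillar a b zs) = some (.leaf b) := by
  induction zs using reverseRecOn with
  | nil => simp [caterpillar_nil, sibling]
  | append_singleton ws z ih =>
    simp only [mem_append, mem_singleton, not_or] at h
    simp [caterpillar_append_singleton, sibling, caterpillar_ne_leaf, ih h.1, Ne.symm h.2]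

theorem sibling_caterpillar_right {zs : List W} (hab : b ≠ a) (h : b ∉ zs) :
    sibling b (caterpillar a b zs) = some (.leaf a) := by
  induction zs using reverseRecOn with
  | nil => simp [caterpillar_nil, sibling, Ne.symm hab]
  | append_singleton ws z ih =>
    simp only [mem_append, mem_singleton, not_or] at h
    simp [caterpillar_append_singleton, sibling, caterpillar_ne_leaf, ih h.1, Ne.symm h.2]

theorem exists_sibling_caterpillar_of_mem {zs : List W} {z : W} (h : z ∈ zs) :
    ∃ ws, ws <+: zs ∧ sibling z (caterpillar a b zs) = some (caterpillar a b ws) := by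
  induction zs using reverseRecOn with
  | nil => simp at h
  | append_singleton ws w ih =>
    rw [caterpillar_append_singleton]
    by_cases hw : w = z
    · exact ⟨ws, prefix_append _ _, by simp [sibling, caterpillar_ne_leaf, hw]⟩
    · obtain ⟨vs, hpre, hvs⟩ :=
        ih ((mem_append.1 h).resolve_right fun hz => hw (mem_singleton.1 hz).symm)
      exact ⟨vs, hpre.trans (prefix_append _ _),
        by simp [sibling, caterpillar_ne_leaf, hw, hvs]⟩

end Caterpillar

section OLA

variable {a b p q i : ℕ} {zs rs : List ℕ}

theorem olaLabel_caterpillar_neg (h : ∀ x ∈ a :: b :: zs, 0 < x) :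
    olaLabel (caterpillar a b zs) < 0 := by
  rcases eq_nil_or_concat zs with rfl | ⟨ws, w, rfl⟩
  · have : 0 < a := h a mem_cons_self
    simp only [caterpillar_nil, olaLabel, minLeaf]
    omega
  · have : 0 < w := h w (by simp)
    simp only [concat_eq_append, caterpillar_append_singleton, olaLabel, minLeaf]
    omega

theorem olaCoord_caterpillar_eq_of_filter_eq {a' b' : ℕ} {zs' : List ℕ}
    (h : (a :: b :: zs).filter (· ≤ i) = (a' :: b' :: zs').filter (· ≤ i)) :
    olaCoord (caterpillar a b zs) i = olaCoord (caterpillar a' b' zs') i := by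
  simp only [olaCoord, restrict_caterpillar, h]

theorem olaCoord_caterpillar (h : (a :: b :: zs).filter (· ≤ i) = p :: q :: rs) :
    olaCoord (caterpillar a b zs) i = ((sibling i (caterpillar p q rs)).map olaLabel).getD 0 := by
  simp only [olaCoord, restrict_caterpillar, h, caterpillarOfList]
  cases sibling i (caterpillar p q rs) <;> rfl

theorem olaCoord_caterpillar_of_filter_eq_left
    (h : (a :: b :: zs).filter (· ≤ i) = i :: q :: rs) (hi : i ∉ rs) :
    olaCoord (caterpillar a b zs) i = q := by
  rw [olaCoord_caterpillar h, sibling_caterpillar_left _ _ hi]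
  rfl

theorem olaCoord_caterpillar_of_filter_eq_right
    (h : (a :: b :: zs).filter (· ≤ i) = p :: i :: rs) (hp : i ≠ p) (hi : i ∉ rs) :
    olaCoord (caterpillar a b zs) i = p := by
  rw [olaCoord_caterpillar h, sibling_caterpillar_right _ _ hp hi]
  rfl

theorem olaCoord_caterpillar_neg_of_filter_eq
    (h : (a :: b :: zs).filter (· ≤ i) = p :: q :: rs) (hi : i ∈ rs)
    (hpos : ∀ x ∈ p :: q :: rs, 0 < x) :
    olaCoord (caterpillar a b zs) i < 0 := by
  obtain ⟨ws, hpre, hws⟩ := exists_sibling_caterpillar_of_mem p q hi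
  rw [olaCoord_caterpillar h, hws]
  exact olaLabel_caterpillar_neg fun x hx =>
    hpos x (cons_subset_cons _ (cons_subset_cons _ hpre.subset) hx)

theorem hamming_olaVec {t t' : PTree ℕ} (h : t.leaves.length = t'.leaves.length) :
    hamming (olaVec t) (olaVec t') =
      (range' 3 (t.leaves.length - 2)).countP fun i => olaCoord t i ≠ olaCoord t' i := by
  simp only [hamming, olaVec, ← h, zip_map', countP_map]
  match t.leaves.length with
  | 0 | 1 => rfl
  | N + 2 =>
    rw [Nat.add_comm, range_add, countP_append, countP_map, Nat.add_sub_cancel_left,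
      range'_eq_map_range, countP_map]
    refine (congrArg₂ _ (by simp [range_succ]) (countP_congr fun x _ => ?_)).trans
      (Nat.zero_add _)
    simp [show 2 + x ≠ 1 by omega, show 2 + x + 1 = 3 + x by omega]

end OLA

section Ranks

theorem filter_le_range' {s m i : ℕ} (h : i < s + m) :
    (range' s m).filter (· ≤ i) = range' s (i + 1 - s) := by
  obtain ⟨k, rfl⟩ : ∃ k, m = (i + 1 - s) + k := ⟨m - (i + 1 - s), by omega⟩
  rw [← range'_append, filter_append, filter_eq_self.2, filter_eq_nil_iff.2, append_nil]
  all_goals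
    intro x hx
    rw [mem_range'_1] at hx
    simp only [decide_eq_true_eq]
    omega

theorem reverse_range'_succ (s k : ℕ) :
    (range' s (k + 1)).reverse = (k + s) :: (range' s k).reverse := by
  simp [range'_concat, Nat.add_comm]

variable {n p q : ℕ} {rs : List ℕ}

theorem countP_olaCoord_ne_of_eq_range' (h : p :: q :: rs = range' 1 n) :
    ((range' 3 (rs.length + 1)).countP fun i =>
      olaCoord (caterpillar p q (rs ++ [n + 1])) i ≠
        olaCoord (caterpillar (n + 1) p (q :: rs)) i) = 1 := by
  have hlen : rs.length + 2 = n := by simpa using congrArg length h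
  have hmem : ∀ x ∈ p :: q :: rs, 1 ≤ x ∧ x ≤ n := by
    rw [h]
    intro x hx
    rw [mem_range'_1] at hx
    omega
  rw [range'_concat, countP_append, countP_eq_zero.2, countP_singleton]
  · have hbound : ∀ x ∈ (n + 1) :: p :: q :: rs, 0 < x ∧ x ≤ n + 1 := by
      rintro x (_ | ⟨_, hx⟩)
      · omega
      · have := hmem x hx
        omega
    have hT : (p :: q :: (rs ++ [n + 1])).filter (· ≤ n + 1) = p :: q :: (rs ++ [n + 1]) :=
      filter_eq_self.2 fun x hx =>
        decide_eq_true (hbound x ((perm_append_singleton _ (p :: q :: rs)).subset hx)).2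
    have hT' : ((n + 1) :: p :: q :: rs).filter (· ≤ n + 1) = (n + 1) :: p :: q :: rs :=
      filter_eq_self.2 fun x hx => decide_eq_true (hbound x hx).2
    have hneg := olaCoord_caterpillar_neg_of_filter_eq hT (by simp) fun x hx =>
      (hbound x ((perm_append_singleton _ (p :: q :: rs)).subset hx)).1
    have hp := (hmem p mem_cons_self).1
    rw [show 3 + 1 * rs.length = n + 1 by omega, olaCoord_caterpillar_of_filter_eq_left hT'
      (fun hx => by have := hmem _ (mem_cons_of_mem _ hx); omega),
      if_pos (decide_eq_true (by omega))]
  · intro i hi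
    rw [mem_range'_1] at hi
    rw [olaCoord_caterpillar_eq_of_filter_eq (a' := n + 1) (b' := p) (zs' := q :: rs)]
    · simp
    · have hi' : ¬n < i := by omega
      rw [← cons_append, ← cons_append, filter_append]
      simp [hi']

theorem countP_olaCoord_ne_of_eq_reverse_range' (h : p :: q :: rs = (range' 2 n).reverse) :
    ((range' 3 (rs.length + 1)).countP fun i =>
      olaCoord (caterpillar p q (rs ++ [1])) i ≠
        olaCoord (caterpillar 1 p (q :: rs)) i) = rs.length + 1 := by
  have hlen : rs.length + 2 = n := by simpa using congrArg length h
  rw [countP_eq_length.2, length_range']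
  intro i hi
  rw [mem_range'_1] at hi
  obtain ⟨k, rfl⟩ : ∃ k, i = k + 3 := ⟨i - 3, by omega⟩
  have hT : (p :: q :: (rs ++ [1])).filter (· ≤ k + 3) =
      (k + 3) :: (k + 2) :: (range' 1 (k + 1)).reverse := by
    rw [← cons_append, ← cons_append, h, ← reverse_cons,
      show 1 :: range' 2 n = range' 1 (n + 1) from rfl, filter_reverse,
      filter_le_range' (by omega), show k + 3 + 1 - 1 = k + 2 + 1 by omega,
      reverse_range'_succ, reverse_range'_succ]
  have hT' : (1 :: p :: q :: rs).filter (· ≤ k + 3) =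
      1 :: (k + 3) :: (range' 2 (k + 1)).reverse := by
    rw [h, filter_cons_of_pos (by simp), filter_reverse, filter_le_range' (by omega),
      show k + 3 + 1 - 2 = k + 1 + 1 by omega, reverse_range'_succ]
  rw [olaCoord_caterpillar_of_filter_eq_left hT (by simp only [mem_reverse, mem_range'_1]; omega),
    olaCoord_caterpillar_of_filter_eq_right hT' (by omega)
      (by simp only [mem_reverse, mem_range'_1]; omega)]
  simp only [ne_eq, decide_eq_true_eq]
  omega

theorem olaCoord_ne_of_three_le {r : ℕ} (hr : 3 ≤ r)
    (h : ((p :: q :: rs ++ [r]).filter (· ≤ r)).Perm (range' 1 r)) :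
    olaCoord (caterpillar p q (rs ++ [r])) r ≠ olaCoord (caterpillar r p (q :: rs)) r := by
  rw [filter_append, filter_singleton, decide_eq_true le_rfl, cond_true] at h
  rcases hF : (p :: q :: rs).filter (· ≤ r) with _ | ⟨p', _ | ⟨q', rest⟩⟩
  all_goals rw [hF] at h
  · exact absurd h.length_eq (by simp; omega)
  · exact absurd h.length_eq (by simp; omega)
  have hpos : ∀ x ∈ p' :: q' :: (rest ++ [r]), 0 < x := fun x hx => by
    have := mem_range'_1.1 (h.subset hx)
    omega
  have hnd := (perm_append_singleton r (p' :: q' :: rest)).nodup_iff.1 (h.nodup_iff.2 nodup_range')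
  have hr' : r ∉ q' :: rest := fun hx => (nodup_cons.1 hnd).1 (mem_cons_of_mem _ hx)
  have hT : (p :: q :: (rs ++ [r])).filter (· ≤ r) = p' :: q' :: (rest ++ [r]) := by
    rw [← cons_append, ← cons_append, filter_append, hF]
    simp
  have hT' : (r :: p :: q :: rs).filter (· ≤ r) = r :: p' :: q' :: rest := by
    rw [filter_cons_of_pos (by simp), hF]
  have hneg := olaCoord_caterpillar_neg_of_filter_eq hT (by simp) hpos
  rw [olaCoord_caterpillar_of_filter_eq_left hT' hr']
  have := hpos p' mem_cons_self
  omega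

theorem olaCoord_three_ne {r : ℕ} (hr : r < 3)
    (h : ((p :: q :: rs ++ [r]).filter (· ≤ 3)).Perm (range' 1 3)) :
    olaCoord (caterpillar p q (rs ++ [r])) 3 ≠ olaCoord (caterpillar r p (q :: rs)) 3 := by
  rw [filter_append, filter_singleton, decide_eq_true (by omega : r ≤ 3), cond_true] at h
  obtain ⟨u, v, hF⟩ := length_eq_two.1 (by simpa using h.length_eq)
  rw [hF] at h
  have hu := mem_range'_1.1 (h.subset (by simp : u ∈ [u, v, r]))
  have hv := mem_range'_1.1 (h.subset (by simp : v ∈ [u, v, r]))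
  have hr1 := mem_range'_1.1 (h.subset (by simp : r ∈ [u, v, r]))
  have hnd := h.nodup_iff.2 nodup_range'
  simp only [cons_append, nil_append, nodup_cons, mem_cons, not_or, not_mem_nil] at hnd
  have hT : (p :: q :: (rs ++ [r])).filter (· ≤ 3) = [u, v, r] := by
    rw [← cons_append, ← cons_append, filter_append, hF]
    simp [show r ≤ 3 by omega]
  have hT' : (r :: p :: q :: rs).filter (· ≤ 3) = [r, u, v] := by
    rw [filter_cons_of_pos (by simp; omega), hF]
  rcases (by omega : u = 3 ∨ v = 3) with rfl | rfl
  · rw [olaCoord_caterpillar_of_filter_eq_left hT (by simp; omega),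
      olaCoord_caterpillar_of_filter_eq_right hT' (by omega) (by simp; omega)]
    omega
  · rw [olaCoord_caterpillar_of_filter_eq_right hT (by omega) (by simp; omega)]
    have := olaCoord_caterpillar_neg_of_filter_eq hT' (by simp) fun x hx => by
      simp only [mem_cons, not_mem_nil, or_false] at hx
      omega
    omega

theorem exists_olaCoord_ne_of_perm {r : ℕ}
    (h : (p :: q :: rs ++ [r]).Perm (range' 1 (rs.length + 3))) :
    ∃ i ∈ range' 3 (rs.length + 1),
      olaCoord (caterpillar p q (rs ++ [r])) i ≠ olaCoord (caterpillar r p (q :: rs)) i := by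
  have hr := mem_range'_1.1 (h.subset (by simp : r ∈ p :: q :: rs ++ [r]))
  have hfilter : ∀ i ≤ rs.length + 3,
      ((p :: q :: rs ++ [r]).filter (· ≤ i)).Perm (range' 1 i) := fun i hi => by
    have := h.filter (· ≤ i)
    rwa [filter_le_range' (by omega), Nat.add_sub_cancel] at this
  rcases le_or_gt 3 r with h3 | h3
  · exact ⟨r, mem_range'_1.2 (by omega), olaCoord_ne_of_three_le h3 (hfilter r (by omega))⟩
  · exact ⟨3, mem_range'_1.2 (by omega), olaCoord_three_ne h3 (hfilter 3 (by omega))⟩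

end Ranks

section Distances

variable {W : Type}

theorem isOrd_iff_perm [DecidableEq W] {t : PTree W} (ht : t.IsPhylo) {σ : W → ℕ} :
    IsOrd t σ ↔ (t.leaves.map σ).Perm (range' 1 t.leaves.length) := by
  have hrange : ∀ x, x ∈ range' 1 t.leaves.length ↔ x ∈ Set.Icc 1 t.leaves.length := by
    intro x
    rw [mem_range'_1, Set.mem_Icc]
    omega
  have himage : ∀ x, x ∈ t.leaves.map σ ↔ x ∈ σ '' {x | x ∈ t.leaves} := by simp
  rw [IsOrd, labelSet, coe_toFinset]
  constructor
  · intro h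
    rw [perm_ext_iff_of_nodup (ht.map_on fun x hx y hy => h.injOn hx hy) nodup_range']
    intro x
    rw [himage, h.image_eq, hrange]
  · intro h
    have himage_eq : σ '' {x | x ∈ t.leaves} = Set.Icc 1 t.leaves.length := by
      ext x
      rw [← himage, h.mem_iff, hrange]
    exact himage_eq ▸ Set.InjOn.bijOn_image fun x hx y hy =>
      inj_on_of_nodup_map (h.nodup_iff.2 nodup_range') hx hy

theorem dOLA_caterpillar (τ : W → ℕ) (a b y : W) (zs : List W) :
    dOLA τ (caterpillar a b (zs ++ [y])) (caterpillar y a (b :: zs)) =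
      (range' 3 (zs.length + 1)).countP fun i =>
        olaCoord (caterpillar (τ a) (τ b) (zs.map τ ++ [τ y])) i ≠
          olaCoord (caterpillar (τ y) (τ a) (τ b :: zs.map τ)) i := by
  rw [dOLA, map_caterpillar, map_caterpillar, hamming_olaVec] <;> simp [leaves_caterpillar]

variable (a b y : W) (zs : List W) {n : ℕ} {τ τ' : W → ℕ}

theorem isOrd_caterpillar_iff [DecidableEq W] (ht : (caterpillar a b (zs ++ [y])).IsPhylo) :
    IsOrd (caterpillar a b (zs ++ [y])) τ ↔
      ((a :: b :: zs).map τ ++ [τ y]).Perm (range' 1 (zs.length + 3)) := by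
  rw [isOrd_iff_perm ht, leaves_caterpillar, ← cons_append, ← cons_append, map_append]
  simp

theorem isOrd_caterpillar_of_map_eq_range' [DecidableEq W]
    (ht : (caterpillar a b (zs ++ [y])).IsPhylo) (hτ : (a :: b :: zs).map τ = range' 1 n)
    (hy : τ y = n + 1) : IsOrd (caterpillar a b (zs ++ [y])) τ := by
  have hlen : zs.length + 2 = n := by simpa using congrArg length hτ
  rw [isOrd_caterpillar_iff _ _ _ _ ht, hτ, hy, show zs.length + 3 = n + 1 by omega,
    range'_concat, Nat.one_mul, Nat.add_comm 1 n]

theorem isOrd_caterpillar_of_map_eq_reverse_range' [DecidableEq W]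
    (ht : (caterpillar a b (zs ++ [y])).IsPhylo)
    (hτ : (a :: b :: zs).map τ = (range' 2 n).reverse)
    (hy : τ y = 1) : IsOrd (caterpillar a b (zs ++ [y])) τ := by
  have hlen : zs.length + 2 = n := by simpa using congrArg length hτ
  rw [isOrd_caterpillar_iff _ _ _ _ ht, hτ, hy, ← reverse_cons,
    show zs.length + 3 = n + 1 by omega]
  exact reverse_perm (range' 1 (n + 1))

theorem dOLA_caterpillar_of_map_eq_range' (hτ : (a :: b :: zs).map τ = range' 1 n)
    (hy : τ y = n + 1) :
    dOLA τ (caterpillar a b (zs ++ [y])) (caterpillar y a (b :: zs)) = 1 := by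
  rw [dOLA_caterpillar, hy]
  simpa using countP_olaCoord_ne_of_eq_range' hτ

theorem dOLA_caterpillar_of_map_eq_reverse_range'
    (hτ : (a :: b :: zs).map τ = (range' 2 n).reverse) (hy : τ y = 1) :
    dOLA τ (caterpillar a b (zs ++ [y])) (caterpillar y a (b :: zs)) = zs.length + 1 := by
  rw [dOLA_caterpillar, hy]
  simpa using countP_olaCoord_ne_of_eq_reverse_range' hτ

theorem one_le_dOLA_caterpillar [DecidableEq W] (ht : (caterpillar a b (zs ++ [y])).IsPhylo)
    (hτ : IsOrd (caterpillar a b (zs ++ [y])) τ) :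
    1 ≤ dOLA τ (caterpillar a b (zs ++ [y])) (caterpillar y a (b :: zs)) := by
  rw [isOrd_caterpillar_iff _ _ _ _ ht] at hτ
  obtain ⟨i, hi, hne⟩ := exists_olaCoord_ne_of_perm (rs := zs.map τ) (by simpa using hτ)
  rw [dOLA_caterpillar]
  exact countP_pos_iff.2 ⟨i, by simpa using hi, decide_eq_true hne⟩

theorem dOLA_caterpillar_le :
    dOLA τ (caterpillar a b (zs ++ [y])) (caterpillar y a (b :: zs)) ≤ zs.length + 1 := by
  rw [dOLA_caterpillar]
  exact countP_le_length.trans (by simp)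

theorem natAbs_sub_dOLA_caterpillar_le [DecidableEq W] (ht : (caterpillar a b (zs ++ [y])).IsPhylo)
    (hτ : IsOrd (caterpillar a b (zs ++ [y])) τ)
    (hτ' : IsOrd (caterpillar a b (zs ++ [y])) τ') :
    ((dOLA τ (caterpillar a b (zs ++ [y])) (caterpillar y a (b :: zs)) : ℤ) -
      dOLA τ' (caterpillar a b (zs ++ [y])) (caterpillar y a (b :: zs))).natAbs ≤ zs.length := by
  have := one_le_dOLA_caterpillar a b y zs ht hτ
  have := one_le_dOLA_caterpillar a b y zs ht hτ'
  have := dOLA_caterpillar_le a b y zs (τ := τ)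
  have := dOLA_caterpillar_le a b y zs (τ := τ')
  omega

end Distances

/-- For every `n ≥ 3` there are two rooted binary
phylogenetic trees on `n + 1` leaves and orderings `σ, σ'` with OLA distances
`1` and `n - 1` respectively; the difference of the OLA distances for two
orderings can be as large as `n - 2`, and this bound is sharp for this pair. -/
theorem ola_order_dependence (n : ℕ) (hn : 3 ≤ n) :
    ∃ (t t' : PTree (Fin (n + 1))) (σ σ' : Fin (n + 1) → ℕ),
      t.IsPhylo ∧ t'.IsPhylo ∧ t.labelSet = t'.labelSet ∧
      IsOrd t σ ∧ IsOrd t σ' ∧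
      dOLA σ t t' = 1 ∧ dOLA σ' t t' = n - 1 ∧
      ∀ τ τ' : Fin (n + 1) → ℕ, IsOrd t τ → IsOrd t τ' →
        ((dOLA τ t t' : ℤ) - (dOLA τ' t t' : ℤ)).natAbs ≤ n - 2 := by
  obtain ⟨a, b, zs, hxs⟩ : ∃ a b zs, (finRange n).map Fin.castSucc = a :: b :: zs := by
    obtain ⟨k, rfl⟩ : ∃ k, n = k + 2 := ⟨n - 2, by omega⟩
    exact ⟨_, _, _, by rw [finRange_succ, finRange_succ]; rfl⟩
  have hlen : zs.length + 2 = n := by simpa using (congrArg length hxs).symm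
  have hphylo : (caterpillar a b (zs ++ [Fin.last n])).IsPhylo := by
    rw [IsPhylo, leaves_caterpillar, ← cons_append, ← cons_append, ← hxs,
      ← finRange_succ_last]
    exact nodup_finRange _
  have hperm : (caterpillar (Fin.last n) a (b :: zs)).leaves.Perm
      (caterpillar a b (zs ++ [Fin.last n])).leaves := by
    simpa [leaves_caterpillar] using (perm_append_singleton _ (a :: b :: zs)).symm
  let σ : Fin (n + 1) → ℕ := fun k => k + 1
  let σ' : Fin (n + 1) → ℕ := fun k => if k = Fin.last n then 1 else n + 1 - k
  have hσ : (a :: b :: zs).map σ = range' 1 n := by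
    rw [← hxs, map_map, range'_eq_map_range, ← map_coe_finRange_eq_range, map_map]
    exact map_congr_left fun k _ => by simp [σ, Nat.add_comm]
  have hσ' : (a :: b :: zs).map σ' = (range' 2 n).reverse := by
    rw [← hxs, map_map, reverse_range', ← map_coe_finRange_eq_range, map_map]
    exact map_congr_left fun k _ => by simp [σ', Fin.castSucc_ne_last]; omega
  refine ⟨_, _, σ, σ', hphylo, hperm.nodup_iff.2 hphylo, (toFinset_eq_of_perm _ _ hperm).symm,
    isOrd_caterpillar_of_map_eq_range' _ _ _ _ hphylo hσ (by simp [σ]),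
    isOrd_caterpillar_of_map_eq_reverse_range' _ _ _ _ hphylo hσ' (by simp [σ']),
    dOLA_caterpillar_of_map_eq_range' _ _ _ _ hσ (by simp [σ]),
    (dOLA_caterpillar_of_map_eq_reverse_range' _ _ _ _ hσ' (by simp [σ'])).trans (by omega),
    fun τ τ' hτ hτ' =>
      (natAbs_sub_dOLA_caterpillar_le _ _ _ _ hphylo hτ hτ').trans (by omega)⟩

end Phylo
end

section
/- Let T and T' be two rooted binary phylogenetic X-trees with |X| = n and let σ be an ordering on X. Suppose T and T' have a common pendant subtree S. Then the OLA labeling of S under σ is identical for T and T', and moreover the OLA vectors of T and T' under σ, restricted to the coordinates associated with the leaves of S, have Hamming distance at most 1. -/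
namespace Phylo
open PTree

/-! The OLA label of an internal vertex depends only on the minimal ranks below its two
children, so isomorphic trees receive isomorphic OLA labellings.  Let `i` be a leaf of the
common pendant subtree `S` other than its smallest leaf `m`.  Restricting to the ranks `≤ i`
keeps both `i` and `m`, so the restricted copy of `S` is not the single leaf `i`, and the
sibling of `i` lies inside it; the `i`-th coordinate is therefore determined by `S` alone.
Only the coordinate of `m` can differ between the two trees. -/

theorem _root_.Option.Rel.exists_eq_some {α β : Type*} {r : α → β → Prop} {a : α} {y : Option β}
    (h : Option.Rel r (some a) y) : ∃ b, y = some b ∧ r a b := by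
  cases h
  exact ⟨_, rfl, ‹_›⟩

theorem _root_.List.countP_le_one {α : Type*} [DecidableEq α] {L : List α} (hL : L.Nodup)
    {p : α → Bool} {c : α} (h : ∀ j ∈ L, p j → j = c) : L.countP p ≤ 1 :=
  calc L.countP p ≤ L.count c := List.countP_mono_left fun j hj hp => by simpa using h j hj hp
    _ ≤ 1 := List.nodup_iff_count_le_one.1 hL c

theorem hamming_map_map {α β : Type} [DecidableEq β] (F F' : α → β) (L : List α) :
    hamming (L.map F) (L.map F') = L.countP fun j => F j ≠ F' j := by
  simp [hamming, List.zip_map', List.countP_map, Function.comp_def]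

theorem restrictVec_map_range (F : ℕ → ℤ) (n : ℕ) (R : Finset ℕ) :
    restrictVec ((List.range n).map F) R = ((List.range n).filter fun j => j + 1 ∈ R).map F := by
  rw [restrictVec, List.length_map, List.length_range, ← List.filterMap_eq_filter,
    List.map_filterMap]
  refine List.filterMap_congr fun j hj => ?_
  by_cases hR : j + 1 ∈ R <;> simp [Option.guard, hR, List.mem_range.1 hj]

namespace PTree

variable {W V : Type}

theorem leaves_map (f : W → V) : ∀ u : PTree W, (u.map f).leaves = u.leaves.map f
  | .leaf _ => rfl
  | .node l r => by simp [PTree.map, leaves, leaves_map f l, leaves_map f r]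

theorem labelSet_map [DecidableEq W] [DecidableEq V] (f : W → V) (u : PTree W) :
    (u.map f).labelSet = u.labelSet.image f := by
  ext; simp [labelSet, leaves_map]

theorem nodup_leaves_map [DecidableEq W] {f : W → V} {u : PTree W} (hu : u.leaves.Nodup)
    (hf : Set.InjOn f u.labelSet) : (u.map f).leaves.Nodup := by
  rw [leaves_map]
  exact hu.map_on fun x hx y hy => hf (by simpa [labelSet] using hx) (by simpa [labelSet] using hy)

theorem length_leaves_eq_of_labelSet_eq [DecidableEq W] {u u' : PTree W} (hu : u.leaves.Nodup)
    (hu' : u'.leaves.Nodup) (h : u.labelSet = u'.labelSet) :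
    u.leaves.length = u'.leaves.length := by
  rw [← List.toFinset_card_of_nodup hu, ← List.toFinset_card_of_nodup hu']
  exact congrArg Finset.card h

end PTree

section Trees

variable {W V : Type}

theorem minLeaf_mem : ∀ u : PTree ℕ, minLeaf u ∈ u.leaves
  | .leaf _ => by simp [minLeaf, leaves]
  | .node l r => by
    rcases min_choice (minLeaf l) (minLeaf r) with h | h <;>
      simp [minLeaf, leaves, h, minLeaf_mem l, minLeaf_mem r]

theorem minLeaf_le : ∀ {u : PTree ℕ} {x : ℕ}, x ∈ u.leaves → minLeaf u ≤ x
  | .leaf _, _, h => by simp_all [minLeaf, leaves]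
  | .node l r, _, h => by
    rcases List.mem_append.1 h with h | h
    · exact (min_le_left _ _).trans (minLeaf_le h)
    · exact (min_le_right _ _).trans (minLeaf_le h)

theorem leaves_sublist_of_subAt {P : List Bool} {u v : PTree W} (h : subAt u P = some v) :
    v.leaves.Sublist u.leaves := by
  induction P generalizing u with
  | nil => cases u <;> cases h <;> rfl
  | cons b P ih =>
    rcases u with _ | ⟨l, r⟩
    · cases h
    · cases b
      · exact (ih h).trans (List.sublist_append_left _ _)
      · exact (ih h).trans (List.sublist_append_right _ _)

theorem subAt_map (f : W → V) (P : List Bool) (u : PTree W) :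
    subAt (u.map f) P = (subAt u P).map (PTree.map f) := by
  induction P generalizing u with
  | nil => cases u <;> rfl
  | cons b P ih => rcases u with _ | ⟨l, r⟩ <;> [rfl; cases b <;> exact ih _]

theorem restrict_eq_none_iff {f : W → Bool} {u : PTree W} :
    restrict f u = none ↔ ∀ x ∈ u.leaves, f x = false := by
  induction u with
  | leaf x => by_cases hx : f x <;> simp [restrict, leaves, hx]
  | node l r ihl ihr =>
    rcases hl : restrict f l with _ | a <;> rcases hr : restrict f r with _ | b <;>
      simp_all [restrict, leaves, or_imp, forall_and]

theorem leaves_restrict {f : W → Bool} {u w : PTree W} (h : restrict f u = some w) :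
    w.leaves = u.leaves.filter f := by
  induction u generalizing w with
  | leaf x =>
    simp only [restrict] at h
    split at h <;> cases h
    simp [leaves, *]
  | node l r ihl ihr =>
    rcases hl : restrict f l with _ | a <;> rcases hr : restrict f r with _ | b <;>
      simp only [restrict, hl, hr, Option.some.injEq, reduceCtorEq] at h <;> subst h <;>
      simp_all [leaves, restrict_eq_none_iff]

theorem restrict_subAt {f : W → Bool} {P : List Bool} {u v vr : PTree W}
    (h : subAt u P = some v) (hv : restrict f v = some vr) :
    ∃ ur P', restrict f u = some ur ∧ subAt ur P' = some vr := by
  induction P generalizing u with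
  | nil => exact ⟨vr, [], by cases u <;> cases h <;> exact hv, by cases vr <;> rfl⟩
  | cons b P ih =>
    rcases u with _ | ⟨l, r⟩
    · cases h
    cases b
    · obtain ⟨ul, P', hul, hsub⟩ := ih (u := l) h
      rcases hr : restrict f r with _ | ur
      · exact ⟨ul, P', by simp [restrict, hul, hr], hsub⟩
      · exact ⟨.node ul ur, false :: P', by simp [restrict, hul, hr], hsub⟩
    · obtain ⟨ur, P', hur, hsub⟩ := ih (u := r) h
      rcases hl : restrict f l with _ | ul
      · exact ⟨ur, P', by simp [restrict, hur, hl], hsub⟩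
      · exact ⟨.node ul ur, true :: P', by simp [restrict, hur, hl], hsub⟩

end Trees

section Sibling

variable {W : Type} [DecidableEq W] {i : W}

theorem sibling_eq_none_of_not_mem {u : PTree W} (h : i ∉ u.leaves) : sibling i u = none := by
  induction u with
  | leaf x => rfl
  | node l r ihl ihr =>
    simp only [leaves, List.mem_append, not_or] at h
    have hl : l ≠ .leaf i := by rintro rfl; simp [leaves] at h
    have hr : r ≠ .leaf i := by rintro rfl; simp [leaves] at h
    simp [sibling, hl, hr, ihl h.1, ihr h.2]

theorem mem_leaves_of_sibling_eq_some {u w : PTree W} (h : sibling i u = some w) :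
    i ∈ u.leaves := by
  by_contra hi
  simp [sibling_eq_none_of_not_mem hi] at h

theorem isSome_sibling {u : PTree W} (hi : i ∈ u.leaves) (hu : u ≠ .leaf i) :
    (sibling i u).isSome := by
  induction u with
  | leaf x => simp_all [leaves]
  | node l r ihl ihr =>
    simp only [sibling]
    split_ifs with hl hr
    · rfl
    · rfl
    rcases List.mem_append.1 hi with hi | hi
    · obtain ⟨w, hw⟩ := Option.isSome_iff_exists.1 (ihl hi hl)
      simp [hw]
    · split <;> simp [ihr hi hr]

theorem sibling_node (l r : PTree W) :
    sibling i (.node l r) =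
      if l = .leaf i then some r else if r = .leaf i then some l
      else if i ∈ l.leaves then sibling i l else sibling i r := by
  by_cases hl : l = .leaf i
  · simp [sibling, hl]
  by_cases hr : r = .leaf i
  · simp [sibling, hl, hr]
  by_cases hi : i ∈ l.leaves
  · obtain ⟨w, hw⟩ := Option.isSome_iff_exists.1 (isSome_sibling hi hl)
    simp [sibling, hl, hr, hi, hw]
  · simp [sibling, hl, hr, hi, sibling_eq_none_of_not_mem hi]

theorem sibling_node_comm {l r : PTree W} (hnd : (PTree.node l r).leaves.Nodup) :
    sibling i (.node l r) = sibling i (.node r l) := by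
  have hdisj : ∀ x ∈ l.leaves, x ∉ r.leaves := fun _ hl hr =>
    List.disjoint_of_nodup_append hnd hl hr
  rw [sibling_node, sibling_node]
  split_ifs <;> simp_all [leaves, sibling_eq_none_of_not_mem]

theorem sibling_eq_of_subAt {P : List Bool} {u v w : PTree W} (hnd : u.leaves.Nodup)
    (hP : subAt u P = some v) (hv : sibling i v = some w) : sibling i u = some w := by
  induction P generalizing u with
  | nil => cases u <;> cases hP <;> exact hv
  | cons b P ih =>
    rcases u with _ | ⟨l, r⟩
    · cases hP
    have hdisj := List.disjoint_of_nodup_append hnd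
    cases b
    · have hw := ih hnd.of_append_left hP
      have hi := mem_leaves_of_sibling_eq_some hw
      have hl : l ≠ .leaf i := by rintro rfl; cases hw
      have hr : r ≠ .leaf i := by rintro rfl; exact hdisj hi (by simp [leaves])
      simp [sibling_node, hl, hr, hi, hw]
    · have hw := ih hnd.of_append_right hP
      have hi := mem_leaves_of_sibling_eq_some hw
      have hl : l ≠ .leaf i := by rintro rfl; exact hdisj (by simp [leaves]) hi
      have hr : r ≠ .leaf i := by rintro rfl; cases hw
      have hil : i ∉ l.leaves := fun h => hdisj h hi
      simp [sibling_node, hl, hr, hil, hw]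

end Sibling

section Iso

variable {W V : Type} {a b : PTree W}

theorem Iso.perm_leaves (h : Iso a b) : a.leaves.Perm b.leaves := by
  induction h with
  | leaf x => rfl
  | node _ _ ih1 ih2 => exact ih1.append ih2
  | swap _ _ ih1 ih2 => exact (ih1.append ih2).trans List.perm_append_comm

theorem Iso.map (f : W → V) (h : Iso a b) : Iso (a.map f) (b.map f) := by
  induction h with
  | leaf x => exact .leaf _
  | node _ _ ih1 ih2 => exact .node ih1 ih2
  | swap _ _ ih1 ih2 => exact .swap ih1 ih2

theorem Iso.eq_leaf_iff (h : Iso a b) {x : W} : a = .leaf x ↔ b = .leaf x := by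
  cases h <;> simp

theorem Iso.minLeaf_eq {a b : PTree ℕ} (h : Iso a b) : minLeaf a = minLeaf b := by
  induction h with
  | leaf x => rfl
  | node _ _ ih1 ih2 => simp [minLeaf, ih1, ih2]
  | swap _ _ ih1 ih2 => simp [minLeaf, ih1, ih2, min_comm]

theorem Iso.olaLabel_eq {a b : PTree ℕ} (h : Iso a b) : olaLabel a = olaLabel b := by
  cases h with
  | leaf x => rfl
  | node h1 h2 => simp [olaLabel, h1.minLeaf_eq, h2.minLeaf_eq]
  | swap h1 h2 => simp [olaLabel, h1.minLeaf_eq, h2.minLeaf_eq, max_comm]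

theorem Iso.olaDec {a b : PTree ℕ} (h : Iso a b) : DIso (olaDec a) (olaDec b) := by
  induction h with
  | leaf x => exact .leaf _
  | node h1 h2 ih1 ih2 =>
    simp only [Phylo.olaDec, h1.minLeaf_eq, h2.minLeaf_eq]
    exact .node ih1 ih2
  | swap h1 h2 ih1 ih2 =>
    simp only [Phylo.olaDec, h1.minLeaf_eq, h2.minLeaf_eq]
    rw [max_comm]
    exact .swap ih1 ih2

theorem Iso.restrict (f : W → Bool) (h : Iso a b) :
    Option.Rel Iso (restrict f a) (restrict f b) := by
  induction h with
  | leaf x =>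
    simp only [Phylo.restrict]
    split
    · exact .some (.leaf x)
    · exact .none
  | @node a b c d _ _ ih1 ih2 =>
    simp only [Phylo.restrict]
    generalize Phylo.restrict f a = x₁, Phylo.restrict f b = x₂, Phylo.restrict f c = y₁,
      Phylo.restrict f d = y₂ at ih1 ih2 ⊢
    cases ih1 <;> cases ih2 <;> constructor <;> (try constructor) <;> assumption
  | @swap a b c d _ _ ih1 ih2 =>
    simp only [Phylo.restrict]
    generalize Phylo.restrict f a = x₁, Phylo.restrict f b = x₂, Phylo.restrict f c = y₁,
      Phylo.restrict f d = y₂ at ih1 ih2 ⊢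
    cases ih1 <;> cases ih2 <;> constructor <;> (try apply Iso.swap) <;> assumption

theorem Iso.rel_sibling_node [DecidableEq W] {i : W} {a b c d : PTree W} (hac : Iso a c)
    (hbd : Iso b d) (ha : Option.Rel Iso (sibling i a) (sibling i c))
    (hb : Option.Rel Iso (sibling i b) (sibling i d)) :
    Option.Rel Iso (sibling i (.node a b)) (sibling i (.node c d)) := by
  rw [sibling_node, sibling_node]
  simp only [hac.eq_leaf_iff, hbd.eq_leaf_iff, hac.perm_leaves.mem_iff]
  split_ifs
  · exact .some hbd
  · exact .some hac
  · exact ha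
  · exact hb

theorem Iso.sibling [DecidableEq W] (i : W) (h : Iso a b) (hnd : a.leaves.Nodup) :
    Option.Rel Iso (sibling i a) (sibling i b) := by
  induction h with
  | leaf x => exact .none
  | node h1 h2 ih1 ih2 =>
    exact rel_sibling_node h1 h2 (ih1 hnd.of_append_left) (ih2 hnd.of_append_right)
  | swap h1 h2 ih1 ih2 =>
    rw [sibling_node_comm ((Iso.swap h1 h2).perm_leaves.nodup_iff.1 hnd)]
    exact rel_sibling_node h1 h2 (ih1 hnd.of_append_left) (ih2 hnd.of_append_right)

end Iso

section OLA

theorem olaCoord_eq_of_subAt {P : List Bool} {u v vr w : PTree ℕ} {i : ℕ} (hnd : u.leaves.Nodup)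
    (hP : subAt u P = some v) (hv : restrict (fun x => decide (x ≤ i)) v = some vr)
    (hw : sibling i vr = some w) : olaCoord u i = olaLabel w := by
  obtain ⟨ur, P', hur, hsub⟩ := restrict_subAt hP hv
  have hnd' : ur.leaves.Nodup := by rw [leaves_restrict hur]; exact hnd.filter _
  simp [olaCoord, hur, sibling_eq_of_subAt hnd' hsub hw]

theorem olaCoord_eq_of_iso_subAt {t t' s s' : PTree ℕ} {p q : List Bool} {i : ℕ}
    (hnd : t.leaves.Nodup) (hnd' : t'.leaves.Nodup) (hs : subAt t p = some s)
    (hs' : subAt t' q = some s') (hss : Iso s s') (hi : i ∈ s.leaves) (hmin : i ≠ minLeaf s) :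
    olaCoord t i = olaCoord t' i := by
  set f : ℕ → Bool := fun x => decide (x ≤ i)
  obtain ⟨sr, hsr⟩ : ∃ sr, restrict f s = some sr := by
    refine Option.ne_none_iff_exists'.1 fun h => ?_
    simpa [f] using restrict_eq_none_iff.1 h i hi
  have hleaves : sr.leaves = s.leaves.filter f := leaves_restrict hsr
  have hisr : i ∈ sr.leaves := by simp [hleaves, f, hi]
  have hsr_ne : sr ≠ .leaf i := by
    rintro rfl
    have : minLeaf s ∈ (PTree.leaf i).leaves := by
      simp [hleaves, f, minLeaf_mem, minLeaf_le hi]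
    simp only [leaves, List.mem_singleton] at this
    exact hmin this.symm
  obtain ⟨v, hv⟩ := Option.isSome_iff_exists.1 (isSome_sibling hisr hsr_ne)
  obtain ⟨sr', hsr', hsr_iso⟩ := (hsr ▸ hss.restrict f).exists_eq_some
  have hnd_sr : sr.leaves.Nodup := hleaves ▸ ((leaves_sublist_of_subAt hs).nodup hnd).filter f
  obtain ⟨v', hv', hvv⟩ := (hv ▸ hsr_iso.sibling i hnd_sr).exists_eq_some
  rw [olaCoord_eq_of_subAt hnd hs hsr hv, olaCoord_eq_of_subAt hnd' hs' hsr' hv']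
  exact hvv.olaLabel_eq

theorem hamming_restrictVec_olaVec_le_one {t t' s s' : PTree ℕ} {p q : List Bool}
    (hnd : t.leaves.Nodup) (hnd' : t'.leaves.Nodup) (hlen : t.leaves.length = t'.leaves.length)
    (hs : subAt t p = some s) (hs' : subAt t' q = some s') (hss : Iso s s') :
    hamming (restrictVec (olaVec t) s.labelSet) (restrictVec (olaVec t') s.labelSet) ≤ 1 := by
  rw [olaVec, olaVec, ← hlen, restrictVec_map_range, restrictVec_map_range, hamming_map_map]
  -- the `j`-th entry (from `0`) is the coordinate of rank `j + 1`
  refine List.countP_le_one (List.nodup_range.filter _) (c := minLeaf s - 1) fun j hj hne => ?_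
  have hi : j + 1 ∈ s.leaves := by simpa [labelSet] using (List.mem_filter.1 hj).2
  by_contra hj_min
  have hcoord := olaCoord_eq_of_iso_subAt hnd hnd' hs hs' hss hi (by omega)
  simp [hcoord] at hne

end OLA

/-- If `T` and `T'` have a common pendant subtree `S`, then
the OLA labelling of `S` under `σ` is identical in `T` and `T'`, and the OLA
vectors restricted to the coordinates associated with the leaves of `S` have
Hamming distance at most `1`. -/
theorem ola_labeling_of_common_pendant {W : Type} [DecidableEq W]
    (t t' : PTree W) (σ : W → ℕ)
    (ht : t.IsPhylo) (ht' : t'.IsPhylo) (hlab : t.labelSet = t'.labelSet)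
    (hσ : IsOrd t σ)
    (p q : List Bool) (s s' : PTree W)
    (hs : subAt t p = some s) (hs' : subAt t' q = some s')
    (hcommon : Iso s s') :
    DIso (olaDec (s.map σ)) (olaDec (s'.map σ)) ∧
    hamming (restrictVec (olaVec (t.map σ)) (s.labelSet.image σ))
        (restrictVec (olaVec (t'.map σ)) (s.labelSet.image σ)) ≤ 1 := by
  have hinj : Set.InjOn σ t.labelSet := hσ.injOn
  have hlen : (t.map σ).leaves.length = (t'.map σ).leaves.length := by
    simp [leaves_map, length_leaves_eq_of_labelSet_eq ht ht' hlab]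
  have hsσ : subAt (t.map σ) p = some (s.map σ) := by simp [subAt_map, hs]
  have hsσ' : subAt (t'.map σ) q = some (s'.map σ) := by simp [subAt_map, hs']
  refine ⟨(hcommon.map σ).olaDec, ?_⟩
  rw [← labelSet_map]
  exact hamming_restrictVec_olaVec_le_one (nodup_leaves_map ht hinj)
    (nodup_leaves_map ht' (hlab ▸ hinj)) hlen hsσ hsσ' (hcommon.map σ)

end Phylo
end

section
/- Let T be a rooted binary phylogenetic X-tree with |X| = n and let S = (x₁, x₂, …, x_n) be a cherry-picking sequence for T. Let σ be the ordering induced by S, i.e., σ(x_i) = n − i + 1. Then the OLA vector of T under σ equals the P2V vector of T under σ. -/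
namespace Phylo
open PTree


/-! The rank-`i` leaf of `T` under `σ` is `x_{n-i+1}`, so the restriction `T_i` of `T` to the
ranks `≤ i` is `T` with `x₁, …, x_{n-i}` picked.  Since `S` is a cherry-picking sequence, the
rank-`i` leaf is in a cherry of `T_i`: its sibling is a leaf.  The OLA label and the P2V label
of a leaf are both its rank, because the P2V labelling only labels internal vertices. -/

namespace PTree

variable {W V : Type}

theorem leaves_map_s10 (f : W → V) (t : PTree W) : (t.map f).leaves = t.leaves.map f := by
  induction t with
  | leaf x => rfl
  | node l r ihl ihr => simp [PTree.map, leaves, ihl, ihr]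

end PTree

section Restrict

variable {W V : Type}

theorem restrict_congr {p q : W → Bool} {t : PTree W} (h : ∀ a ∈ t.leaves, p a = q a) :
    restrict p t = restrict q t := by
  induction t with
  | leaf x => simp [restrict, h x (by simp [leaves])]
  | node l r ihl ihr =>
    simp only [restrict, ihl fun a ha => h a (by simp [leaves, ha]),
      ihr fun a ha => h a (by simp [leaves, ha])]

theorem restrict_map (f : W → V) (p : V → Bool) (t : PTree W) :
    restrict p (t.map f) = (restrict (p ∘ f) t).map (PTree.map f) := by
  induction t with
  | leaf x => by_cases h : p (f x) <;> simp [PTree.map, restrict, h]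
  | node l r ihl ihr =>
    simp only [PTree.map, restrict, ihl, ihr]
    cases restrict (p ∘ f) l <;> cases restrict (p ∘ f) r <;> simp [PTree.map]

theorem mem_leaves_of_restrict_eq_some {p : W → Bool} {t u : PTree W}
    (h : restrict p t = some u) {a : W} (ha : a ∈ u.leaves) : a ∈ t.leaves := by
  induction t generalizing u with
  | leaf x =>
    by_cases hp : p x <;> simp only [restrict, hp] at h <;> cases h
    exact ha
  | node l r ihl ihr =>
    simp only [leaves, List.mem_append]
    simp only [restrict] at h
    rcases hl : restrict p l with _ | a <;> rcases hr : restrict p r with _ | b <;>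
      simp only [hl, hr, reduceCtorEq, Option.some.injEq] at h <;> subst h
    · exact .inr (ihr hr ha)
    · exact .inl (ihl hl ha)
    · simp only [leaves, List.mem_append] at ha
      exact ha.imp (ihl hl) (ihr hr)

theorem sibling_map [DecidableEq W] [DecidableEq V] (f : W → V) {x : W} {t : PTree W}
    (hinj : ∀ a ∈ t.leaves, f a = f x → a = x) :
    sibling (f x) (t.map f) = (sibling x t).map (PTree.map f) := by
  induction t with
  | leaf a => simp [PTree.map, sibling]
  | node l r ihl ihr =>
    have map_eq_leaf : ∀ s : PTree W, (∀ a ∈ s.leaves, f a = f x → a = x) →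
        (s.map f = .leaf (f x) ↔ s = .leaf x) := by
      intro s hs
      refine ⟨fun h => ?_, fun h => h ▸ rfl⟩
      cases s with
      | leaf a =>
        simp only [PTree.map, PTree.leaf.injEq] at h
        rw [hs a (by simp [leaves]) h]
      | node _ _ => simp [PTree.map] at h
    have hinjl : ∀ a ∈ l.leaves, f a = f x → a = x := fun a ha => hinj a (by simp [leaves, ha])
    have hinjr : ∀ a ∈ r.leaves, f a = f x → a = x := fun a ha => hinj a (by simp [leaves, ha])
    simp only [PTree.map, sibling, map_eq_leaf l hinjl, map_eq_leaf r hinjr, ihl hinjl, ihr hinjr]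
    split_ifs <;> try rfl
    cases sibling x l <;> rfl

end Restrict

namespace LTree

def erase : LTree → PTree ℕ
  | .leaf r => .leaf r
  | .node _ l r => .node (erase l) (erase r)

theorem erase_ofPTree (t : PTree ℕ) : (ofPTree t).erase = t := by
  induction t with
  | leaf x => rfl
  | node l r ihl ihr => simp [ofPTree, erase, ihl, ihr]

theorem erase_setLbl (j : ℕ) (t : LTree) (p : List Bool) : (t.setLbl j p).erase = t.erase := by
  induction t generalizing p with
  | leaf r => cases p <;> rfl
  | node lbl l r ihl ihr =>
    rcases p with _ | ⟨_ | _, p⟩ <;> simp [setLbl, erase, ihl, ihr]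

theorem erase_step (j : ℕ) (t : LTree) : (step j t).erase = t.erase := by
  unfold step
  cases List.argmax Prod.snd t.cands with
  | none => rfl
  | some c => exact erase_setLbl j t c.1

theorem erase_run (k j : ℕ) (t : LTree) : (run k j t).erase = t.erase := by
  induction k generalizing j t with
  | zero => rfl
  | succ k ih => rw [run, ih, erase_step]

theorem erase_eq_leaf_iff {s : LTree} {y : ℕ} : s.erase = .leaf y ↔ s = .leaf y := by
  cases s <;> simp [erase]

theorem sibling_erase (i : ℕ) (t : LTree) : sibling i t.erase = (siblingL i t).map erase := by
  induction t with
  | leaf r => simp [erase, sibling, siblingL]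
  | node lbl l r ihl ihr =>
    simp only [erase, sibling, siblingL, erase_eq_leaf_iff, ihl, ihr]
    split_ifs <;> try rfl
    cases siblingL i l <;> rfl

end LTree

section Coordinates

variable {t u : PTree ℕ} {i y : ℕ}

theorem olaCoord_eq_of_sibling_eq_leaf (hu : restrict (fun x => decide (x ≤ i)) t = some u)
    (hs : sibling i u = some (.leaf y)) : olaCoord t i = y := by
  simp only [olaCoord, hu, hs, olaLabel]

theorem p2vCoord_eq_of_sibling_eq_leaf (hu : restrict (fun x => decide (x ≤ i)) t = some u)
    (hs : sibling i u = some (.leaf y)) : p2vCoord t i = y := by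
  set lt := LTree.run (i - 1) (i + 1) (LTree.ofPTree u)
  have hlt : p2vLabeled t i = some lt := by rw [p2vLabeled, hu, Option.map_some]
  have hsL : LTree.siblingL i lt = some (.leaf y) := by
    rw [← LTree.erase_ofPTree u, ← LTree.erase_run (i - 1) (i + 1), LTree.sibling_erase] at hs
    obtain ⟨s, hs, hsy⟩ := Option.map_eq_some_iff.mp hs
    rwa [← LTree.erase_eq_leaf_iff.mp hsy]
  simp only [p2vCoord, hlt, hsL, LTree.lbl?, Option.getD_some]

theorem olaVec_eq_p2vVec_of_olaCoord_eq
    (h : ∀ i, 3 ≤ i → i ≤ t.leaves.length → olaCoord t i = p2vCoord t i) :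
    olaVec t = p2vVec t := by
  refine List.map_congr_left fun j hj => ?_
  rw [List.mem_range] at hj
  split_ifs
  · rfl
  · rfl
  · exact h (j + 1) (by omega) (by omega)

end Coordinates

section InducedOrd

variable {W : Type} [DecidableEq W] {S : List W}

theorem inducedOrd_le_iff {a : W} (ha : a ∈ S) (i : ℕ) :
    inducedOrd S a ≤ i ↔ a ∉ S.take (S.length - i) := by
  have := List.idxOf_lt_length_iff.mpr ha
  rw [List.mem_take_iff_idxOf_lt ha, inducedOrd]
  omega

theorem eq_of_inducedOrd_eq {a b : W} (ha : a ∈ S) (hb : b ∈ S)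
    (h : inducedOrd S a = inducedOrd S b) : a = b := by
  have := List.idxOf_lt_length_iff.mpr ha
  have := List.idxOf_lt_length_iff.mpr hb
  exact (List.idxOf_inj ha).mp (by unfold inducedOrd at h; omega)

theorem inducedOrd_getElem_of_nodup (hS : S.Nodup) (j : ℕ) (hj : j < S.length) :
    inducedOrd S S[j] = S.length - j := by
  rw [inducedOrd, hS.idxOf_getElem]

theorem restrict_map_inducedOrd {t : PTree W} (henum : ∀ x, x ∈ S ↔ x ∈ t.leaves) (i : ℕ) :
    restrict (fun x => decide (x ≤ i)) (t.map (inducedOrd S)) =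
      (restAfter t S (S.length - i)).map (PTree.map (inducedOrd S)) := by
  rw [restrict_map, restAfter,
    restrict_congr (q := fun a => decide (a ∉ S.take (S.length - i)))
      fun a ha => by simp [inducedOrd_le_iff ((henum a).mpr ha)]]

theorem IsCPS.exists_sibling_eq_leaf {t : PTree W} (hcps : IsCPS t S) {j : ℕ}
    (hj : j + 1 < S.length) :
    ∃ u, restAfter t S j = some u ∧ ∃ y, sibling S[j] u = some (.leaf y) := by
  obtain ⟨u, hu, hcherry⟩ := hcps j hj
  obtain ⟨y, hy⟩ := hcherry (by omega)
  refine ⟨u, hu, y, ?_⟩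
  simp only [cherryPartner, List.get_eq_getElem] at hy
  split at hy <;> simp_all

end InducedOrd

/-- If `S` is a cherry-picking sequence for `T` and `σ`
the ordering induced by `S`, then the OLA and P2V vectors of `T` under `σ`
coincide. -/
theorem olaVec_eq_p2vVec_of_cps {W : Type} [DecidableEq W]
    (t : PTree W) (S : List W) (ht : t.IsPhylo)
    (hnd : S.Nodup) (henum : ∀ x, x ∈ S ↔ x ∈ t.leaves)
    (hcps : IsCPS t S) :
    olaVec (t.map (inducedOrd S)) = p2vVec (t.map (inducedOrd S)) := by
  set σ := inducedOrd S with hσ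
  have hlen : t.leaves.length = S.length :=
    ((List.perm_ext_iff_of_nodup hnd ht).mpr henum).length_eq.symm
  refine olaVec_eq_p2vVec_of_olaCoord_eq fun i hi3 hin => ?_
  rw [leaves_map_s10, List.length_map, hlen] at hin
  obtain ⟨u, hu, y, hy⟩ := hcps.exists_sibling_eq_leaf (j := S.length - i) (by omega)
  have hrest : restrict (fun x => decide (x ≤ i)) (t.map σ) = some (u.map σ) := by
    rw [restrict_map_inducedOrd henum, hu, Option.map_some]
  have hsib : sibling i (u.map σ) = some (.leaf (σ y)) := by
    have hσx : σ S[S.length - i] = i := by rw [hσ, inducedOrd_getElem_of_nodup hnd]; omega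
    rw [← hσx, sibling_map σ fun a ha h => eq_of_inducedOrd_eq
      ((henum a).mpr (mem_leaves_of_restrict_eq_some hu ha)) (List.getElem_mem _) h, hy]
    rfl
  rw [olaCoord_eq_of_sibling_eq_leaf hrest hsib, p2vCoord_eq_of_sibling_eq_leaf hrest hsib]

end Phylo
end
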